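/- Let A ∈ ℝ_{≥0}^{n×n}, L the labeled set, and suppose a regularization B ∈ ℝ_{≥0}^{n×n} gives every 1-hop starved node of A at least one positive entry in a labeled column, while B is zero elsewhere in unlabeled columns. Then in the graph of Ã = A + αB (α > 0), every unlabeled vertex either has a labeled neighbor or had one already in A; consequently Ã has no k-hop starved nodes for any k ≥ 1. -/
import Mathlib


/-- In the graph of a nonnegative matrix `M` (edge `(i,j)` iff `i ≠ j` and
`M i j > 0`), vertex `i` is `k`-hop starved w.r.t. the labeled set `L` if `i`
is unlabeled and no labeled vertex is reachable from `i` by a walk of length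
between `1` and `k`. -/
def matStarved {n : ℕ} (M : Matrix (Fin n) (Fin n) ℝ) (L : Finset (Fin n))
    (k : ℕ) (i : Fin n) : Prop :=
  i ∉ L ∧ ∀ j ∈ L, ¬ ∃ m : ℕ, 1 ≤ m ∧ m ≤ k ∧ ∃ f : ℕ → Fin n,
    f 0 = i ∧ f m = j ∧ ∀ t < m, f t ≠ f (t + 1) ∧ 0 < M (f t) (f (t + 1))

/-- if a nonnegative regularization `B` gives every 1-hop
starved node of `A` a positive entry in some labeled column, and `B` vanishes
in unlabeled columns, then in `Ã = A + α • B` (`α > 0`) every unlabeled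
vertex has a labeled neighbor in `Ã` or already had one in `A`; consequently
`Ã` has no `k`-hop starved nodes for any `k ≥ 1`. -/
theorem stmt_15 {n : ℕ} (A B : Matrix (Fin n) (Fin n) ℝ)
    (hA : ∀ i j, 0 ≤ A i j) (hB : ∀ i j, 0 ≤ B i j)
    (α : ℝ) (hα : 0 < α) (L : Finset (Fin n))
    (hstarved : ∀ i, (i ∉ L ∧ ∀ j ∈ L, A i j = 0) → ∃ j ∈ L, 0 < B i j)
    (hzero : ∀ i j, j ∉ L → B i j = 0) :
    (∀ i, i ∉ L → ((∃ j ∈ L, 0 < (A + α • B) i j) ∨ (∃ j ∈ L, 0 < A i j))) ∧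
    (∀ k : ℕ, 1 ≤ k → ∀ i, ¬ matStarved (A + α • B) L k i) := by
  have key : ∀ i, i ∉ L → ∃ j ∈ L, 0 < (A + α • B) i j := by
    intro i hi
    by_cases h : ∃ j ∈ L, 0 < A i j
    · obtain ⟨j, hj, hpos⟩ := h
      exact ⟨j, hj, by
        have : 0 ≤ α * B i j := mul_nonneg hα.le (hB i j)
        simp [Matrix.add_apply, Matrix.smul_apply]
        nlinarith⟩
    · push_neg at h
      obtain ⟨j, hj, hpos⟩ := hstarved i ⟨hi, fun j hjL => le_antisymm (h j hjL) (hA i j)⟩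
      refine ⟨j, hj, ?_⟩
      have : 0 < α * B i j := mul_pos hα hpos
      simp [Matrix.add_apply, Matrix.smul_apply]
      nlinarith [hA i j]
  constructor
  · intro i hi; exact Or.inl (key i hi)
  · intro k hk i hst
    obtain ⟨hi, hwalk⟩ := hst
    obtain ⟨j, hj, hpos⟩ := key i hi
    have hne : i ≠ j := fun h => hi (h ▸ hj)
    exact hwalk j hj ⟨1, le_refl 1, hk, fun t => if t = 0 then i else j,
      by simp, by simp,
      by intro t ht; interval_cases t; simpa using ⟨hne, hpos⟩⟩
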